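/- arXiv:0801.3174 — 2 statements merged into one kernel-verified Lean document; each statement's English description precedes it below -/
import Mathlib

section
/- Let w ∈ H and let θ ∈ ℝ_+^J satisfy θ_j = 0 for at least one j ∈ I and w = Σ_{j∈I} θ_j d_j. Set σ := Σ_{k : θ_k > 0} θ_k/(1−β_k). Then σ ≥ 0, w_j = θ_j/(1−β_j) − β_j σ for every j ∈ I, and for every set E with {k ∈ I : θ_k > 0} ⊆ E ⊊ I one has σ = Σ_{k∈E} θ_k/(1−β_k) = (Σ_{j∈E} w_j)/(1 − Σ_{j∈E} β_j). -/
/-!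
The `j`-th coordinate of `d_k` is `[k = j]/(1-β_j) - β_j/(1-β_k)`, so summing against `θ` gives
`w_j = θ_j/(1-β_j) - β_j σ`, where `σ` may be summed over any `E ⊇ {θ > 0}` because the other
terms vanish. Summing over such an `E` gives `Σ_E w = σ (1 - Σ_E β)`, and `1 - Σ_E β > 0` as soon
as `E` misses an index, since every `β_i` is positive and `Σ β = 1`.
-/

open Finset

variable {ι : Type*}

noncomputable def gpsDirection [DecidableEq ι] (β : ι → ℝ) (i : ι) : ι → ℝ :=
  fun j => if j = i then 1 else -β j / (1 - β i)

lemma sum_filter_pos_div_eq_sum_div [Fintype ι] {θ : ι → ℝ} (hθ : ∀ k, 0 ≤ θ k) (c : ι → ℝ)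
    {E : Finset ι} (hE : univ.filter (fun k => 0 < θ k) ⊆ E) :
    ∑ k ∈ univ.filter (fun k => 0 < θ k), θ k / c k = ∑ k ∈ E, θ k / c k := by
  refine sum_subset hE fun k _ hk => ?_
  have hθk : θ k = 0 := le_antisymm (by simpa using hk) (hθ k)
  rw [hθk, zero_div]

lemma gpsDirection_apply_eq [DecidableEq ι] {β : ι → ℝ} {k : ι} (hk : β k ≠ 1) (j : ι) :
    gpsDirection β k j = (if k = j then 1 / (1 - β j) else 0) - β j / (1 - β k) := by
  have hk' : 1 - β k ≠ 0 := sub_ne_zero.mpr hk.symm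
  rcases eq_or_ne k j with rfl | h
  · simp only [gpsDirection, if_true]; field_simp
  · simp only [gpsDirection, h, h.symm, if_false]; ring

lemma sum_smul_gpsDirection_apply [Fintype ι] [DecidableEq ι] {β : ι → ℝ} (hβ : ∀ k, β k ≠ 1)
    (θ : ι → ℝ) (j : ι) :
    (∑ k, θ k • gpsDirection β k) j = θ j / (1 - β j) - β j * ∑ k, θ k / (1 - β k) := by
  have hterm : ∀ k, θ k * gpsDirection β k j =
      (if k = j then θ j / (1 - β j) else 0) - β j * (θ k / (1 - β k)) := fun k => by
    rw [gpsDirection_apply_eq (hβ k)]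
    split_ifs with h
    · subst h; ring
    · ring
  simp only [Finset.sum_apply, Pi.smul_apply, smul_eq_mul, hterm, sum_sub_distrib, sum_ite_eq',
    mem_univ, if_true, mul_sum]

lemma sum_lt_one_of_ne_univ [Fintype ι] {β : ι → ℝ} (hβ : ∀ i, 0 < β i) (hβsum : ∑ i, β i = 1)
    {E : Finset ι} (hE : E ≠ univ) : ∑ j ∈ E, β j < 1 := by
  obtain ⟨i, hi⟩ : ∃ i, i ∉ E := by simpa [eq_univ_iff_forall] using hE
  rw [← hβsum]
  exact sum_lt_sum_of_subset (subset_univ E) (mem_univ i) hi (hβ i) fun j _ _ => (hβ j).le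

lemma sum_eq_mul_one_sub_sum {w a β : ι → ℝ} {σ : ℝ} (hw : ∀ j, w j = a j - β j * σ)
    {E : Finset ι} (hσ : σ = ∑ k ∈ E, a k) :
    ∑ j ∈ E, w j = σ * (1 - ∑ j ∈ E, β j) := by
  rw [sum_congr rfl fun j _ => hw j, sum_sub_distrib, ← sum_mul, ← hσ]
  ring

theorem gps_representation_formulas_general
    (J : ℕ) (β : Fin J → ℝ)
    (hβ : ∀ i, 0 < β i ∧ β i < 1) (hβsum : ∑ i, β i = 1)
    (d : Fin J → Fin J → ℝ)
    (hd : ∀ i j, d i j = if j = i then 1 else -(β j) / (1 - β i))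
    (w : Fin J → ℝ)
    (θ : Fin J → ℝ) (hθ : ∀ k, 0 ≤ θ k)
    (hrep : w = ∑ k, θ k • d k)
    (σ : ℝ)
    (hσ : σ = ∑ k ∈ Finset.univ.filter (fun k => 0 < θ k), θ k / (1 - β k)) :
    0 ≤ σ ∧
    (∀ j, w j = θ j / (1 - β j) - β j * σ) ∧
    (∀ E : Finset (Fin J),
      Finset.univ.filter (fun k => 0 < θ k) ⊆ E → E ≠ Finset.univ →
        σ = ∑ k ∈ E, θ k / (1 - β k) ∧
        σ = (∑ j ∈ E, w j) / (1 - ∑ j ∈ E, β j)) := by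
  have hd : d = gpsDirection β := funext fun i => funext (hd i)
  have hσE : ∀ E, univ.filter (fun k => 0 < θ k) ⊆ E → σ = ∑ k ∈ E, θ k / (1 - β k) :=
    fun E hE => hσ.trans (sum_filter_pos_div_eq_sum_div hθ _ hE)
  have hσ_univ := hσE univ (subset_univ _)
  have hwj : ∀ j, w j = θ j / (1 - β j) - β j * σ := fun j => by
    rw [hrep, hd, sum_smul_gpsDirection_apply (fun k => (hβ k).2.ne), hσ_univ]
  refine ⟨hσ_univ ▸ sum_nonneg fun k _ => div_nonneg (hθ k) (sub_pos.mpr (hβ k).2).le, hwj,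
    fun E hE hE_ne => ⟨hσE E hE, ?_⟩⟩
  have hpos : 0 < 1 - ∑ j ∈ E, β j :=
    sub_pos.mpr (sum_lt_one_of_ne_univ (fun i => (hβ i).1) hβsum hE_ne)
  exact eq_div_of_mul_eq hpos.ne' (sum_eq_mul_one_sub_sum hwj (hσE E hE)).symm

/-- if `w ∈ H`, `θ ∈ ℝ_+^J` has a zero coordinate and `w = Σ_j θ_j d_j`, then
with `σ := Σ_{k : θ_k > 0} θ_k/(1−β_k)` one has `σ ≥ 0`,
`w_j = θ_j/(1−β_j) − β_j σ` for all `j`, and for every set `E` with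
`{k : θ_k > 0} ⊆ E ⊊ I`, `σ = Σ_{k∈E} θ_k/(1−β_k) = (Σ_{j∈E} w_j)/(1 − Σ_{j∈E} β_j)`. -/
theorem gps_representation_formulas
    (J : ℕ) (hJ : 2 ≤ J) (β : Fin J → ℝ)
    (hβ : ∀ i, 0 < β i ∧ β i < 1) (hβsum : ∑ i, β i = 1)
    (d : Fin J → Fin J → ℝ)
    (hd : ∀ i j, d i j = if j = i then 1 else -(β j) / (1 - β i))
    (w : Fin J → ℝ) (hw : ∑ i, w i = 0)
    (θ : Fin J → ℝ) (hθ : ∀ k, 0 ≤ θ k) (hzero : ∃ k, θ k = 0)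
    (hrep : w = ∑ k, θ k • d k)
    (σ : ℝ)
    (hσ : σ = ∑ k ∈ Finset.univ.filter (fun k => 0 < θ k), θ k / (1 - β k)) :
    0 ≤ σ ∧
    (∀ j, w j = θ j / (1 - β j) - β j * σ) ∧
    (∀ E : Finset (Fin J),
      Finset.univ.filter (fun k => 0 < θ k) ⊆ E → E ≠ Finset.univ →
        σ = ∑ k ∈ E, θ k / (1 - β k) ∧
        σ = (∑ j ∈ E, w j) / (1 - ∑ j ∈ E, β j)) :=
  gps_representation_formulas_general J β hβ hβsum d hd w θ hθ hrep σ hσ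
end

section
/- Let ν ∈ ℝ^J with Σ_{j∈I} ν_j ≥ 0, and let S ⊊ I be a set such that r_S := (−Σ_{j∈S} ν_j)/(1 − Σ_{j∈S} β_j) > 0 and such that, for every j ∈ I, ν_j/β_j < r_S if and only if j ∈ S. Define θ̃_j := −(1−β_j) ν_j + β_j (1−β_j) r_S for j ∈ S, and κ̃ := ν + Σ_{j∈S} θ̃_j d_j. Then S is nonempty, θ̃_j > 0 for every j ∈ S, κ̃_j = 0 for every j ∈ S, κ̃_j = ν_j − β_j r_S ≥ 0 for every j ∉ S, and κ̃ is a GPS projection of ν. -/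
/-- The GPS direction of constraint `d_i = e_i − Σ_{j≠i} (β_j/(1−β_i)) e_j`. -/
noncomputable def gpsD {J : ℕ} (β : Fin J → ℝ) (i : Fin J) : Fin J → ℝ :=
  fun j => if j = i then 1 else -(β j) / (1 - β i)

/-- The extra direction `d_{J+1} = (1/√J) Σ_i e_i`. -/
noncomputable def gpsDlast (J : ℕ) : Fin J → ℝ := fun _ => (Real.sqrt J)⁻¹

/-- The set `d(x)` of allowable directions of constraint at `x ∈ ℝ_+^J`. -/
noncomputable def gpsDirSet {J : ℕ} (β : Fin J → ℝ) (x : Fin J → ℝ) :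
    Set (Fin J → ℝ) :=
  {w | (x = 0 ∧ ∃ a : Fin J → ℝ, ∃ b : ℝ, (∀ i, 0 ≤ a i) ∧ 0 ≤ b ∧
          w = (∑ i, a i • gpsD β i) + b • gpsDlast J) ∨
       (x ≠ 0 ∧ ∃ a : Fin J → ℝ, (∀ i, 0 ≤ a i) ∧ (∀ i, x i ≠ 0 → a i = 0) ∧
          w = ∑ i, a i • gpsD β i)}

/-- `κ ∈ ℝ_+^J` is a GPS projection of `ν ∈ ℝ^J`. -/
noncomputable def IsGPSProj {J : ℕ} (β : Fin J → ℝ) (ν κ : Fin J → ℝ) : Prop :=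
  (∀ i, 0 ≤ κ i) ∧
  (((∀ i, 0 ≤ ν i) ∧ κ = ν) ∨
   ((¬ ∀ i, 0 ≤ ν i) ∧ (∃ i, κ i = 0) ∧ (κ - ν) ∈ gpsDirSet β κ))

open Finset

/-!
On `S` the proposed coefficients are `θ̃_j = (1 - β_j)(β_j r_S - ν_j)`, so `θ̃_j / (1 - β_j) = β_j r_S - ν_j`,
and by the choice of `r_S` these ratios sum to `r_S` over `S`. Since
`d_k = (1 - β_k)⁻¹ e_k - (1 - β_k)⁻¹ β`, the push `Σ_{k ∈ S} θ̃_k d_k` changes coordinate `j` by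
`[j ∈ S] θ̃_j / (1 - β_j) - β_j r_S`, which zeroes `κ̃` on `S` and gives `ν_j - β_j r_S` off `S`.
The threshold condition `ν_j / β_j < r_S ↔ j ∈ S` turns into `θ̃_j > 0` on `S` and `κ̃_j ≥ 0` off `S`,
and `Σ_{j ∈ S} ν_j = -r_S (1 - Σ_{j ∈ S} β_j) < 0` shows that `ν` lies outside the orthant.
-/

section Directions

variable {J : ℕ} {β : Fin J → ℝ}

lemma gpsD_apply_eq {i : Fin J} (hi : β i ≠ 1) (j : Fin J) :
    gpsD β i j = (if j = i then 1 / (1 - β i) else 0) - β j / (1 - β i) := by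
  have : 1 - β i ≠ 0 := sub_ne_zero.2 hi.symm
  unfold gpsD
  split_ifs with hji
  · subst hji; field_simp
  · ring

lemma sum_smul_gpsD_apply {S : Finset (Fin J)} (hβ : ∀ k ∈ S, β k ≠ 1) (θ : Fin J → ℝ)
    (j : Fin J) :
    (∑ k ∈ S, θ k • gpsD β k) j =
      (if j ∈ S then θ j / (1 - β j) else 0) - β j * ∑ k ∈ S, θ k / (1 - β k) := by
  rw [Finset.sum_apply, mul_sum, ← sum_ite_eq S j (fun k => θ k / (1 - β k)), ← sum_sub_distrib]
  refine sum_congr rfl fun k hk => ?_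
  rw [Pi.smul_apply, smul_eq_mul, gpsD_apply_eq (hβ k hk)]
  split_ifs <;> ring

lemma sum_smul_gpsD_mem_gpsDirSet {S : Finset (Fin J)} {θ x : Fin J → ℝ}
    (hθ : ∀ k ∈ S, 0 ≤ θ k) (hx : ∀ k ∈ S, x k = 0) :
    ∑ k ∈ S, θ k • gpsD β k ∈ gpsDirSet β x := by
  set a : Fin J → ℝ := fun i => if i ∈ S then θ i else 0
  have ha : ∀ i, 0 ≤ a i := fun i => by
    by_cases hi : i ∈ S <;> simp [a, hi, hθ]
  have hsum : ∑ k ∈ S, θ k • gpsD β k = ∑ i, a i • gpsD β i := by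
    simp only [a, ite_smul, zero_smul, sum_ite_mem, univ_inter]
  by_cases hx0 : x = 0
  · exact Or.inl ⟨hx0, a, 0, ha, le_rfl, by rw [zero_smul, add_zero, hsum]⟩
  · refine Or.inr ⟨hx0, a, ha, fun i hi => ?_, hsum⟩
    have : i ∉ S := fun hiS => hi (hx i hiS)
    simp [a, this]

lemma isGPSProj_of_sub_eq_sum_smul_gpsD {ν κ θ : Fin J → ℝ} {S : Finset (Fin J)}
    (hκ : ∀ i, 0 ≤ κ i) (hν : ¬ ∀ i, 0 ≤ ν i) (hS : S.Nonempty)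
    (hθ : ∀ k ∈ S, 0 ≤ θ k) (hκS : ∀ k ∈ S, κ k = 0)
    (hκν : κ - ν = ∑ k ∈ S, θ k • gpsD β k) :
    IsGPSProj β ν κ := by
  obtain ⟨k, hk⟩ := hS
  exact ⟨hκ, Or.inr ⟨hν, ⟨k, hκS k hk⟩, hκν ▸ sum_smul_gpsD_mem_gpsDirSet hθ hκS⟩⟩

lemma add_sum_smul_gpsD_apply {ν θ : Fin J → ℝ} {S : Finset (Fin J)} {r : ℝ}
    (hβ : ∀ k ∈ S, β k ≠ 1) (hr : r * (1 - ∑ k ∈ S, β k) = -∑ k ∈ S, ν k)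
    (hθ : ∀ k ∈ S, θ k = (1 - β k) * (β k * r - ν k)) (j : Fin J) :
    (ν + ∑ k ∈ S, θ k • gpsD β k) j = if j ∈ S then 0 else ν j - β j * r := by
  have hratio : ∀ k ∈ S, θ k / (1 - β k) = β k * r - ν k := fun k hk => by
    rw [hθ k hk, mul_div_cancel_left₀ _ (sub_ne_zero.2 (hβ k hk).symm)]
  have hsum : ∑ k ∈ S, θ k / (1 - β k) = r := by
    rw [sum_congr rfl hratio, sum_sub_distrib, ← sum_mul]
    linarith
  rw [Pi.add_apply, sum_smul_gpsD_apply hβ, hsum]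
  split_ifs with hj
  · rw [hratio j hj]; ring
  · ring

end Directions

theorem gps_projection_from_subcritical_set_general
    (J : ℕ) (β : Fin J → ℝ)
    (hβ : ∀ i, 0 < β i ∧ β i < 1) (hβsum : ∑ i, β i = 1)
    (ν : Fin J → ℝ)
    (S : Finset (Fin J)) (hSne : S ≠ Finset.univ)
    (r : ℝ) (hr : r = (-∑ j ∈ S, ν j) / (1 - ∑ j ∈ S, β j)) (hrpos : 0 < r)
    (hiff : ∀ j, ν j / β j < r ↔ j ∈ S)
    (θ : Fin J → ℝ)
    (hθdef : ∀ j ∈ S, θ j = -(1 - β j) * ν j + β j * (1 - β j) * r)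
    (κ : Fin J → ℝ) (hκdef : κ = ν + ∑ j ∈ S, θ j • gpsD β j) :
    S.Nonempty ∧
    (∀ j ∈ S, 0 < θ j) ∧
    (∀ j ∈ S, κ j = 0) ∧
    (∀ j ∉ S, κ j = ν j - β j * r ∧ 0 ≤ κ j) ∧
    IsGPSProj β ν κ := by
  obtain ⟨i₀, hi₀⟩ : ∃ i, i ∉ S := by simpa [eq_univ_iff_forall] using hSne
  have hβS : 0 < 1 - ∑ j ∈ S, β j := sub_pos.2 <| hβsum ▸
    sum_lt_sum_of_subset (subset_univ S) (mem_univ i₀) hi₀ (hβ i₀).1 fun j _ _ => (hβ j).1.le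
  have hνS : r * (1 - ∑ j ∈ S, β j) = -∑ j ∈ S, ν j := by rw [hr, div_mul_cancel₀ _ hβS.ne']
  have hθ : ∀ j ∈ S, θ j = (1 - β j) * (β j * r - ν j) := fun j hj => by rw [hθdef j hj]; ring
  have hκ : ∀ j, κ j = if j ∈ S then 0 else ν j - β j * r := fun j => hκdef ▸
    add_sum_smul_gpsD_apply (fun k _ => (hβ k).2.ne) hνS hθ j
  have hθpos : ∀ j ∈ S, 0 < θ j := fun j hj => by
    have := (div_lt_iff₀ (hβ j).1).1 ((hiff j).2 hj)
    rw [hθ j hj]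
    exact mul_pos (sub_pos.2 (hβ j).2) (by linarith)
  have hκnn : ∀ j, 0 ≤ κ j := fun j => by
    rw [hκ j]
    split_ifs with hj
    · exact le_rfl
    · have := (le_div_iff₀ (hβ j).1).1 (not_lt.1 (mt (hiff j).1 hj))
      linarith
  have hSnon : S.Nonempty := nonempty_iff_ne_empty.2 fun hS => by
    simp only [hS, sum_empty, neg_zero, sub_zero, div_one] at hr
    linarith
  have hνneg : ¬ ∀ i, 0 ≤ ν i := fun h =>
    (sum_nonneg fun j (_ : j ∈ S) => h j).not_gt (neg_pos.1 (hνS ▸ mul_pos hrpos hβS))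
  have hκS : ∀ j ∈ S, κ j = 0 := fun j hj => by rw [hκ j, if_pos hj]
  refine ⟨hSnon, hθpos, hκS, fun j hj => ⟨by rw [hκ j, if_neg hj], hκnn j⟩, ?_⟩
  exact isGPSProj_of_sub_eq_sum_smul_gpsD hκnn hνneg hSnon (fun j hj => (hθpos j hj).le) hκS
    (by rw [hκdef, add_sub_cancel_left])

/-- if `Σ_j ν_j ≥ 0`, `S ⊊ I` satisfies `r_S > 0` and
`ν_j/β_j < r_S ↔ j ∈ S`, then with `θ̃_j = −(1−β_j)ν_j + β_j(1−β_j)r_S` for `j ∈ S` and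
`κ̃ = ν + Σ_{j∈S} θ̃_j d_j`, the set `S` is nonempty, `θ̃_j > 0` on `S`, `κ̃_j = 0` on
`S`, `κ̃_j = ν_j − β_j r_S ≥ 0` off `S`, and `κ̃` is a GPS projection of `ν`. -/
theorem gps_projection_from_subcritical_set
    (J : ℕ) (hJ : 2 ≤ J) (β : Fin J → ℝ)
    (hβ : ∀ i, 0 < β i ∧ β i < 1) (hβsum : ∑ i, β i = 1)
    (ν : Fin J → ℝ) (hν : 0 ≤ ∑ j, ν j)
    (S : Finset (Fin J)) (hSne : S ≠ Finset.univ)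
    (r : ℝ) (hr : r = (-∑ j ∈ S, ν j) / (1 - ∑ j ∈ S, β j)) (hrpos : 0 < r)
    (hiff : ∀ j, ν j / β j < r ↔ j ∈ S)
    (θ : Fin J → ℝ)
    (hθdef : ∀ j ∈ S, θ j = -(1 - β j) * ν j + β j * (1 - β j) * r)
    (κ : Fin J → ℝ) (hκdef : κ = ν + ∑ j ∈ S, θ j • gpsD β j) :
    S.Nonempty ∧
    (∀ j ∈ S, 0 < θ j) ∧
    (∀ j ∈ S, κ j = 0) ∧
    (∀ j ∉ S, κ j = ν j - β j * r ∧ 0 ≤ κ j) ∧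
    IsGPSProj β ν κ :=
  gps_projection_from_subcritical_set_general J β hβ hβsum ν S hSne r hr hrpos hiff θ hθdef κ hκdef
end
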